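/- arXiv:1606.02138 — 3 statements merged into one kernel-verified Lean document; each statement's English description precedes it below -/
import Mathlib

section
/- Let ψ₁, ψ₂ be quadratic forms on ℝ⁴ with polarizations b₁, b₂, and let p, q be common zeros of ψ₁ and ψ₂. Define φ_p(x) = b₁(p,x)ψ₂(x) − b₂(p,x)ψ₁(x), φ_q(x) = b₁(q,x)ψ₂(x) − b₂(q,x)ψ₁(x), and φ_{pq}(x) = b₁(p,x)b₂(q,x) − b₁(q,x)b₂(p,x). If r satisfies φ_p(r) = 0 and φ_q(r) = 0 but φ_{pq}(r) ≠ 0, then ψ₁(r) = 0 and ψ₂(r) = 0. -/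
open QuadraticMap

/-- If `p, q` are common zeros of quadratic forms `ψ₁, ψ₂` on `ℝ⁴` and `r` is a zero of
`φ_p` and `φ_q` but not of `φ_{pq}`, then `r` is a common zero of `ψ₁` and `ψ₂`. -/
theorem stmt_4 (ψ₁ ψ₂ : QuadraticForm ℝ (Fin 4 → ℝ)) (p q : Fin 4 → ℝ)
    (hp₁ : ψ₁ p = 0) (hp₂ : ψ₂ p = 0) (hq₁ : ψ₁ q = 0) (hq₂ : ψ₂ q = 0)
    (r : Fin 4 → ℝ)
    (hφp : polar ψ₁ p r * ψ₂ r - polar ψ₂ p r * ψ₁ r = 0)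
    (hφq : polar ψ₁ q r * ψ₂ r - polar ψ₂ q r * ψ₁ r = 0)
    (hφpq : polar ψ₁ p r * polar ψ₂ q r - polar ψ₁ q r * polar ψ₂ p r ≠ 0) :
    ψ₁ r = 0 ∧ ψ₂ r = 0 := by
  have h1 : ψ₁ r * (polar ψ₁ p r * polar ψ₂ q r - polar ψ₁ q r * polar ψ₂ p r) = 0 := by
    linear_combination polar ψ₁ q r * hφp - polar ψ₁ p r * hφq
  have h2 : ψ₂ r * (polar ψ₁ p r * polar ψ₂ q r - polar ψ₁ q r * polar ψ₂ p r) = 0 := by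
    linear_combination polar ψ₂ q r * hφp - polar ψ₂ p r * hφq
  exact ⟨(mul_eq_zero.1 h1).resolve_right hφpq, (mul_eq_zero.1 h2).resolve_right hφpq⟩
end

section
/- (Eight associated points, coordinate version, concurrent case) Let a₁, a₂, a₃ be nonzero real numbers, and consider the eight points in ℝ⁴ of the form (−ε₁a₁, −ε₂a₂, −ε₃a₃, 1) where each εᵢ ∈ {0,1}. Then any quadratic form in four variables vanishing at seven of these eight points vanishes at the eighth. -/
lemma cube_identity {M : Type*} [AddCommGroup M] [Module ℝ M] (Q : QuadraticForm ℝ M)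
    (c u1 u2 u3 : M) :
    Q (c+u1+u2+u3) + (Q (c+u1) + Q (c+u2) + Q (c+u3)) =
      Q (c+u1+u2) + Q (c+u1+u3) + Q (c+u2+u3) + Q c := by
  have e : ∀ x y : M, Q (x+y) = Q x + Q y + QuadraticMap.polar Q x y := by
    intro x y; simp [QuadraticMap.polar]
  simp only [e, QuadraticMap.polar_add_left, QuadraticMap.polar_add_right]
  ring

/-- Eight associated points, concurrent case: any quadratic form in four variables vanishing
at seven of the eight points `(−ε₁a₁, −ε₂a₂, −ε₃a₃, 1)`, `εᵢ ∈ {0,1}`, vanishes at the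
eighth. -/
theorem stmt_10 (a₁ a₂ a₃ : ℝ) (h₁ : a₁ ≠ 0) (h₂ : a₂ ≠ 0) (h₃ : a₃ ≠ 0)
    (ψ : QuadraticForm ℝ (Fin 4 → ℝ))
    (pt : (Fin 3 → Bool) → (Fin 4 → ℝ))
    (hpt : pt = fun ε => ![-(if ε 0 then a₁ else 0), -(if ε 1 then a₂ else 0),
      -(if ε 2 then a₃ else 0), 1])
    (ε₀ : Fin 3 → Bool) (hvanish : ∀ ε, ε ≠ ε₀ → ψ (pt ε) = 0) :
    ∀ ε, ψ (pt ε) = 0 := by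
  set c : Fin 4 → ℝ := ![0, 0, 0, 1] with hc
  set u1 : Fin 4 → ℝ := ![-a₁, 0, 0, 0] with hu1
  set u2 : Fin 4 → ℝ := ![0, -a₂, 0, 0] with hu2
  set u3 : Fin 4 → ℝ := ![0, 0, -a₃, 0] with hu3
  have hp : ∀ b0 b1 b2 : Bool, pt ![b0, b1, b2] =
      c + (if b0 then u1 else 0) + (if b1 then u2 else 0) + (if b2 then u3 else 0) := by
    intro b0 b1 b2
    subst hpt
    funext i
    fin_cases i <;> cases b0 <;> cases b1 <;> cases b2 <;>
      simp [hc, hu1, hu2, hu3] <;> ring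
  have key := cube_identity ψ c u1 u2 u3
  have h8 : ψ (pt ![true,true,true]) + (ψ (pt ![true,false,false]) +
      ψ (pt ![false,true,false]) + ψ (pt ![false,false,true])) =
      ψ (pt ![true,true,false]) + ψ (pt ![true,false,true]) +
      ψ (pt ![false,true,true]) + ψ (pt ![false,false,false]) := by
    simp only [hp]
    simpa using key
  intro ε
  by_cases h : ε = ε₀
  · subst h
    have hεm : ε = ![ε 0, ε 1, ε 2] := by funext i; fin_cases i <;> rfl
    cases hb0 : ε 0 <;> cases hb1 : ε 1 <;> cases hb2 : ε 2 <;>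
      rw [hb0, hb1, hb2] at hεm <;> rw [hεm] at hvanish ⊢
    · linarith [h8, hvanish ![false,false,true] (by decide), hvanish ![false,true,false] (by decide), hvanish ![false,true,true] (by decide), hvanish ![true,false,false] (by decide), hvanish ![true,false,true] (by decide), hvanish ![true,true,false] (by decide), hvanish ![true,true,true] (by decide)]
    · linarith [h8, hvanish ![false,false,false] (by decide), hvanish ![false,true,false] (by decide), hvanish ![false,true,true] (by decide), hvanish ![true,false,false] (by decide), hvanish ![true,false,true] (by decide), hvanish ![true,true,false] (by decide), hvanish ![true,true,true] (by decide)]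
    · linarith [h8, hvanish ![false,false,false] (by decide), hvanish ![false,false,true] (by decide), hvanish ![false,true,true] (by decide), hvanish ![true,false,false] (by decide), hvanish ![true,false,true] (by decide), hvanish ![true,true,false] (by decide), hvanish ![true,true,true] (by decide)]
    · linarith [h8, hvanish ![false,false,false] (by decide), hvanish ![false,false,true] (by decide), hvanish ![false,true,false] (by decide), hvanish ![true,false,false] (by decide), hvanish ![true,false,true] (by decide), hvanish ![true,true,false] (by decide), hvanish ![true,true,true] (by decide)]
    · linarith [h8, hvanish ![false,false,false] (by decide), hvanish ![false,false,true] (by decide), hvanish ![false,true,false] (by decide), hvanish ![false,true,true] (by decide), hvanish ![true,false,true] (by decide), hvanish ![true,true,false] (by decide), hvanish ![true,true,true] (by decide)]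
    · linarith [h8, hvanish ![false,false,false] (by decide), hvanish ![false,false,true] (by decide), hvanish ![false,true,false] (by decide), hvanish ![false,true,true] (by decide), hvanish ![true,false,false] (by decide), hvanish ![true,true,false] (by decide), hvanish ![true,true,true] (by decide)]
    · linarith [h8, hvanish ![false,false,false] (by decide), hvanish ![false,false,true] (by decide), hvanish ![false,true,false] (by decide), hvanish ![false,true,true] (by decide), hvanish ![true,false,false] (by decide), hvanish ![true,false,true] (by decide), hvanish ![true,true,true] (by decide)]
    · linarith [h8, hvanish ![false,false,false] (by decide), hvanish ![false,false,true] (by decide), hvanish ![false,true,false] (by decide), hvanish ![false,true,true] (by decide), hvanish ![true,false,false] (by decide), hvanish ![true,false,true] (by decide), hvanish ![true,true,false] (by decide)]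
  · exact hvanish ε h
end

section
/- Let ψ₂(X) = X₃X₄ and let ψ be a quadratic form on ℝ⁴ with polarization b, such that ψ is degenerate at a point x (i.e. b(·,x) = 0) with x₃x₄ ≠ 0, and such that the zero set of ψ restricted to each of the planes X₃ = 0 and X₄ = 0 is a nondegenerate conic. Then there is at most one nonzero λ ∈ ℝ such that ψ + λψ₂ is degenerate at some point; in particular, in the pencil spanned by ψ and ψ₂, at most two forms other than ψ₂ are degenerate. -/
open QuadraticMap

/-- Let `ψ₂ = X₃X₄` and let `ψ` be a quadratic form on `ℝ⁴` degenerate at a point `x₀` with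
`x₀₃x₀₄ ≠ 0`, whose restriction to each of the planes `X₃ = 0` and `X₄ = 0` is a
nondegenerate conic. Then there is at most one nonzero `λ` such that `ψ + λψ₂` is
degenerate at some (nonzero) point. -/
theorem stmt_14 (ψ ψ₂ : QuadraticForm ℝ (Fin 4 → ℝ))
    (hψ₂ : ∀ x, ψ₂ x = x 2 * x 3)
    (x₀ : Fin 4 → ℝ) (hx₀ : x₀ 2 * x₀ 3 ≠ 0) (hdeg : ∀ z, polar ψ z x₀ = 0)
    (hplane3 : ∀ y : Fin 4 → ℝ, y 2 = 0 →
      (∀ z : Fin 4 → ℝ, z 2 = 0 → polar ψ z y = 0) → y = 0)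
    (hplane4 : ∀ y : Fin 4 → ℝ, y 3 = 0 →
      (∀ z : Fin 4 → ℝ, z 3 = 0 → polar ψ z y = 0) → y = 0) :
    {l : ℝ | l ≠ 0 ∧ ∃ y : Fin 4 → ℝ, y ≠ 0 ∧
      ∀ z, polar (ψ + l • ψ₂) z y = 0}.Subsingleton := by
  have x2 : x₀ 2 ≠ 0 := fun h => hx₀ (by rw [h]; ring)
  have x3 : x₀ 3 ≠ 0 := fun h => hx₀ (by rw [h]; ring)
  have hpol : ∀ (m : ℝ) (z w : Fin 4 → ℝ), polar (⇑(ψ + m • ψ₂)) z w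
      = polar ψ z w + m * (z 2 * w 3 + z 3 * w 2) := by
    intro m z w
    simp only [QuadraticMap.polar, QuadraticMap.add_apply, QuadraticMap.smul_apply,
      smul_eq_mul, Pi.add_apply, hψ₂]
    ring
  have key : ∀ (m : ℝ) (w : Fin 4 → ℝ), m ≠ 0 → w ≠ 0 →
      (∀ z, polar (⇑(ψ + m • ψ₂)) z w = 0) →
      w 2 ≠ 0 ∧ w 3 ≠ 0 ∧ x₀ 2 * w 3 + x₀ 3 * w 2 = 0 := by
    intro m w hm hw h
    have hw' : ∀ z, polar ψ z w = -(m * (z 2 * w 3 + z 3 * w 2)) := by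
      intro z; have := h z; rw [hpol] at this; linarith
    have h2 : w 2 ≠ 0 := by
      intro h2
      exact hw (hplane3 w h2 (fun z hz => by rw [hw' z, hz, h2]; ring))
    have h3 : w 3 ≠ 0 := by
      intro h3
      exact hw (hplane4 w h3 (fun z hz => by rw [hw' z, hz, h3]; ring))
    refine ⟨h2, h3, ?_⟩
    have hx : polar ψ x₀ w = 0 := by rw [polar_comm]; exact hdeg w
    have h0 := hw' x₀
    rw [hx] at h0
    have h0' : m * (x₀ 2 * w 3 + x₀ 3 * w 2) = 0 := by linarith
    rcases mul_eq_zero.mp h0' with h | h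
    · exact absurd h hm
    · exact h
  intro l hl l' hl'
  obtain ⟨hl0, y, hy0, hy⟩ := hl
  obtain ⟨hl0', y', hy0', hy'⟩ := hl'
  obtain ⟨h2, h3, hx⟩ := key l y hl0 hy0 hy
  obtain ⟨h2', h3', hx'⟩ := key l' y' hl0' hy0' hy'
  have c1 := hy y'
  have c2 := hy' y
  rw [hpol] at c1 c2
  have hsym : polar ψ y' y = polar ψ y y' := polar_comm _ _ _
  -- (l - l') * S = 0 with S = y' 2 * y 3 + y' 3 * y 2
  have hS : (l - l') * (y' 2 * y 3 + y' 3 * y 2) = 0 := by nlinarith [c1, c2, hsym]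
  have hSne : y' 2 * y 3 + y' 3 * y 2 ≠ 0 := by
    intro h
    have : x₀ 2 * (y' 2 * y 3 + y' 3 * y 2) = -2 * (x₀ 3 * (y 2 * y' 2)) := by linear_combination y' 2 * hx + y 2 * hx'
    rw [h, mul_zero] at this
    have : x₀ 3 * (y 2 * y' 2) = 0 := by linarith
    exact mul_ne_zero x3 (mul_ne_zero h2 h2') this
  have := mul_eq_zero.mp hS
  rcases this with h | h
  · linarith
  · exact absurd h hSne
end
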